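/- arXiv:2303.06561 — 4 statements merged into one kernel-verified Lean document; each statement's English description precedes it below -/
import Mathlib

section
/- Let σ : ℝ → ℝ be real analytic, not equal to any polynomial, and with bounded derivative σ'. Let z_1, …, z_n ∈ ℝ^d be nonzero vectors that are pairwise non-parallel, i.e., for all i ≠ j the vectors z_i and z_j are linearly independent. Then the n×n symmetric matrix G with entries G_{ij} = (∫_{ℝ^d} σ'(⟨w, z_i⟩) σ'(⟨w, z_j⟩) dγ_d(w)) · ⟨z_i, z_j⟩ is positive definite; equivalently, its smallest eigenvalue is strictly positive. -/
/-!
Write `S_i(w) = σ'(⟨w, z_i⟩)`. The matrix is the Gram matrix in `L²(γ_d; ℝ^d)` of the vector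
fields `w ↦ S_i(w) z_i`, so it is positive definite as soon as these are linearly independent;
as they are continuous, `γ_d` charges every open set and the `z_i` are nonzero, it suffices that
the functions `S_i` are. Restrict a vanishing combination `∑ c_i S_i` to a generic line
`w = s u`, on which the numbers `a_i = ⟨u, z_i⟩` are nonzero with pairwise distinct absolute
values (the bad `u` lie in finitely many hyperplanes), and differentiate `k` times at `s = 0`:
`(∑ c_i a_i^k) σ^{(k+1)}(0) = 0`. Since `σ` is analytic but not a polynomial,
`σ^{(k+1)}(0) ≠ 0` for infinitely many `k`, and along those `k` the term of largest `|a_i|`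
dominates the power sums, forcing all `c_i = 0`.
-/

open MeasureTheory ProbabilityTheory

/-- The standard Gaussian measure `N(0, I_d)` on `ℝ^d`. -/
noncomputable def stdGaussian (d : ℕ) : Measure (Fin d → ℝ) :=
  Measure.pi fun _ => gaussianReal 0 1

open Filter Topology
open scoped BoundedContinuousFunction ContDiff Nat

theorem AnalyticOnNhd.exists_polynomial_eq_of_iteratedDeriv_eq_zero {𝕜 : Type*} [RCLike 𝕜]
    {f : 𝕜 → 𝕜} (hf : AnalyticOnNhd 𝕜 f Set.univ) {N : ℕ}
    (hN : ∀ k ≥ N, iteratedDeriv k f 0 = 0) :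
    ∃ p : Polynomial 𝕜, ∀ x, f x = p.eval x := by
  let a : ℕ → 𝕜 := fun k => (k ! : 𝕜)⁻¹ * iteratedDeriv k f 0
  let p : Polynomial 𝕜 := ∑ k ∈ Finset.range N, Polynomial.C (a k) * Polynomial.X ^ k
  obtain ⟨P, r, hP⟩ := hf 0 trivial
  have hball : ∀ y ∈ Metric.eball 0 r, f y = p.eval y := by
    intro y hy
    have htaylor : HasSum (fun k => a k * y ^ k) (f y) := by
      simpa [iteratedFDeriv_apply_eq_iteratedDeriv_mul_prod, a, mul_comm, mul_left_comm]
        using hP.hasSum_iteratedFDeriv hy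
    have hfinite : HasSum (fun k => a k * y ^ k) (∑ k ∈ Finset.range N, a k * y ^ k) :=
      hasSum_sum_of_ne_finset_zero fun k hk => by simp [a, hN k (by simpa using hk)]
    simp [htaylor.unique hfinite, p, Polynomial.eval_finsetSum]
  have hfp := hf.eq_of_eventuallyEq (AnalyticOnNhd.eval_polynomial p)
    (eventually_of_mem (Metric.eball_mem_nhds 0 hP.r_pos) hball)
  exact ⟨p, congrFun hfp⟩

theorem AnalyticOnNhd.frequently_iteratedDeriv_deriv_ne_zero {𝕜 : Type*} [RCLike 𝕜]
    {f : 𝕜 → 𝕜} (hf : AnalyticOnNhd 𝕜 f Set.univ)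
    (hpoly : ¬ ∃ p : Polynomial 𝕜, ∀ x, f x = p.eval x) :
    ∃ᶠ k in atTop, iteratedDeriv k (deriv f) 0 ≠ 0 := by
  refine not_eventually.1 fun h => hpoly ?_
  obtain ⟨N, hN⟩ := eventually_atTop.1 h
  refine hf.exists_polynomial_eq_of_iteratedDeriv_eq_zero (N := N + 1) fun k hk => ?_
  obtain ⟨m, rfl⟩ : ∃ m, k = m + 1 := ⟨k - 1, by omega⟩
  rw [iteratedDeriv_succ']
  exact hN m (by omega)

theorem eq_zero_of_frequently_sum_mul_pow_eq_zero_of_abs_lt {ι : Type*} [DecidableEq ι]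
    {s : Finset ι} {b c : ι → ℝ} {i₀ : ι} (hi₀ : i₀ ∈ s) (hb : b i₀ ≠ 0)
    (hlt : ∀ j ∈ s, j ≠ i₀ → |b j| < |b i₀|)
    (h : ∃ᶠ k in atTop, ∑ i ∈ s, c i * b i ^ k = 0) : c i₀ = 0 := by
  set B := |b i₀|
  have hB : 0 < B := abs_pos.2 hb
  set r : ℕ → ℝ := fun k => ∑ j ∈ s.erase i₀, c j * (b j / B) ^ k
  have hr : Tendsto r atTop (𝓝 0) := by
    rw [← Finset.sum_const_zero (s := s.erase i₀)]
    refine tendsto_finsetSum _ fun j hj => ?_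
    have hj1 : |b j / B| < 1 := by
      rw [abs_div, abs_of_pos hB, div_lt_one hB]
      exact hlt j (Finset.mem_of_mem_erase hj) (Finset.ne_of_mem_erase hj)
    simpa using (tendsto_pow_atTop_nhds_zero_of_abs_lt_one hj1).const_mul (c j)
  have hfreq : ∃ᶠ k in atTop, |r k| = |c i₀| := h.mono fun k hk => by
    have hk' : c i₀ * (b i₀ / B) ^ k + r k = 0 := by
      rw [Finset.add_sum_erase s (fun i => c i * (b i / B) ^ k) hi₀]
      simp only [div_pow, ← mul_div_assoc, ← Finset.sum_div, hk, zero_div]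
    rw [eq_neg_of_add_eq_zero_right hk', abs_neg, abs_mul, abs_pow, abs_div, abs_abs,
      div_self hB.ne', one_pow, mul_one]
  simpa [eq_comm] using tendsto_nhds_unique_of_frequently_eq hr.abs tendsto_const_nhds hfreq

theorem eq_zero_of_frequently_sum_mul_pow_eq_zero {ι : Type*} [DecidableEq ι] (s : Finset ι)
    {b c : ι → ℝ} (hb : ∀ i ∈ s, b i ≠ 0) (hinj : Set.InjOn (fun i => |b i|) s)
    (h : ∃ᶠ k in atTop, ∑ i ∈ s, c i * b i ^ k = 0) : ∀ i ∈ s, c i = 0 := by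
  induction s using Finset.strongInduction with
  | H s ih =>
    intro i hi
    obtain ⟨i₀, hi₀, hmax⟩ := s.exists_max_image (fun i => |b i|) ⟨i, hi⟩
    have hc₀ : c i₀ = 0 := eq_zero_of_frequently_sum_mul_pow_eq_zero_of_abs_lt hi₀ (hb i₀ hi₀)
      (fun j hj hji => (hmax j hj).lt_of_ne fun he => hji (hinj hj hi₀ he)) h
    obtain rfl | hii₀ := eq_or_ne i i₀
    · exact hc₀
    refine ih _ (Finset.erase_ssubset hi₀) (fun j hj => hb j (Finset.mem_of_mem_erase hj))
      (hinj.mono fun j hj => Finset.mem_of_mem_erase hj) (h.mono fun k hk => ?_) i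
      (Finset.mem_erase.2 ⟨hii₀, hi⟩)
    rwa [← Finset.add_sum_erase s _ hi₀, hc₀, zero_mul, zero_add] at hk

theorem ae_dotProduct_ne_zero {ι : Type*} [Fintype ι] {v : ι → ℝ} (hv : v ≠ 0) :
    ∀ᵐ u : ι → ℝ, u ⬝ᵥ v ≠ 0 := by
  have hker : LinearMap.ker ((dotProductBilin ℝ ℝ).flip v) ≠ ⊤ := fun h => by
    have : v ⬝ᵥ v = 0 := by simpa using h.ge (Submodule.mem_top (x := v))
    exact hv (dotProduct_self_eq_zero.1 this)
  simp only [ae_iff, ne_eq, not_not]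
  exact Measure.addHaar_submodule volume _ hker

theorem ae_abs_dotProduct_ne {ι : Type*} [Fintype ι] {v w : ι → ℝ}
    (h : LinearIndependent ℝ ![v, w]) : ∀ᵐ u : ι → ℝ, |u ⬝ᵥ v| ≠ |u ⬝ᵥ w| := by
  have hsub : v - w ≠ 0 := fun h0 => by
    simpa using LinearIndependent.pair_iff.1 h 1 (-1) (by simpa [sub_eq_add_neg] using h0)
  have hadd : v + w ≠ 0 := fun h0 => by
    simpa using LinearIndependent.pair_iff.1 h 1 1 (by simpa using h0)
  filter_upwards [ae_dotProduct_ne_zero hsub, ae_dotProduct_ne_zero hadd] with u hs ha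
  rw [dotProduct_sub, sub_ne_zero] at hs
  rw [dotProduct_add, ← sub_neg_eq_add, sub_ne_zero] at ha
  exact fun h => (abs_eq_abs.1 h).elim hs ha

theorem linearIndependent_comp_dotProduct {ι κ : Type*} [Fintype ι] [Fintype κ] {g : ℝ → ℝ}
    (hg : ContDiff ℝ ∞ g) (hg₀ : ∃ᶠ k in atTop, iteratedDeriv k g 0 ≠ 0) {z : ι → κ → ℝ}
    (hz : ∀ i, z i ≠ 0) (hpar : Pairwise fun i j => LinearIndependent ℝ ![z i, z j]) :
    LinearIndependent ℝ fun i (w : κ → ℝ) => g (w ⬝ᵥ z i) := by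
  classical
  obtain ⟨u, hu₀, hu⟩ : ∃ u : κ → ℝ,
      (∀ i, u ⬝ᵥ z i ≠ 0) ∧ Pairwise fun i j => |u ⬝ᵥ z i| ≠ |u ⬝ᵥ z j| :=
    ((ae_all_iff.2 fun i => ae_dotProduct_ne_zero (hz i)).and (ae_all_iff.2 fun i =>
      ae_all_iff.2 fun j => eventually_imp_distrib_left.2 fun hij =>
        ae_abs_dotProduct_ne (hpar hij))).exists
  rw [Fintype.linearIndependent_iff]
  intro c hc i
  have hline : (fun s => ∑ j, c j * g ((u ⬝ᵥ z j) * s)) = 0 := funext fun s => by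
    simpa [smul_dotProduct, mul_comm] using congrFun hc (s • u)
  have htaylor : ∀ k, (∑ j, c j * (u ⬝ᵥ z j) ^ k) * iteratedDeriv k g 0 = 0 := fun k => by
    have hgk : ContDiff ℝ k g := hg.of_le (by exact_mod_cast le_top)
    have := congrArg (iteratedDeriv k · 0) hline
    simp (disch := fun_prop) only [iteratedDeriv_fun_sum, iteratedDeriv_const_mul_field,
      iteratedDeriv_comp_const_mul hgk] at this
    simpa [Finset.sum_mul, mul_assoc] using this
  exact eq_zero_of_frequently_sum_mul_pow_eq_zero Finset.univ (fun j _ => hu₀ j)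
    (fun j _ l _ hjl => by_contra fun h => hu h hjl)
    (hg₀.mono fun k hk => (mul_eq_zero.1 (htaylor k)).resolve_right hk) i (Finset.mem_univ i)

theorem linearIndependent_fun_smul_of_ne_zero {ι α K E : Type*} [Field K] [AddCommGroup E]
    [Module K E] {g : ι → α → K} (hg : LinearIndependent K g) {v : ι → E} (hv : ∀ i, v i ≠ 0) :
    LinearIndependent K fun i a => g i a • v i := by
  rw [linearIndependent_iff'] at hg ⊢
  intro s c hc i hi
  obtain ⟨ℓ, hℓ⟩ : ∃ ℓ : Module.Dual K E, ℓ (v i) ≠ 0 := by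
    by_contra! h
    exact hv i ((Module.forall_dual_apply_eq_zero_iff K _).1 h)
  have hℓc : ∑ j ∈ s, (c j * ℓ (v j)) • g j = 0 := funext fun a => by
    simpa [Finset.sum_apply, mul_comm, mul_left_comm] using congrArg ℓ (congrFun hc a)
  exact (mul_eq_zero.1 (hg s _ hℓc i hi)).resolve_right hℓ

namespace BoundedContinuousFunction

@[simp]
theorem smul_apply' {α 𝕜 β : Type*} [TopologicalSpace α] [NormedField 𝕜]
    [SeminormedAddCommGroup β] [NormedSpace 𝕜 β] (f : α →ᵇ 𝕜) (g : α →ᵇ β) (a : α) :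
    (f • g) a = f a • g a := rfl

variable {ι α E : Type*} [TopologicalSpace α] [MeasurableSpace α] [BorelSpace α]
  [NormedAddCommGroup E] [InnerProductSpace ℝ E] [SecondCountableTopologyEither α E]
  (μ : Measure α) [IsFiniteMeasure μ]

theorem gram_toLp_smul_const (h : ι → α →ᵇ ℝ) (v : ι → E) (i j : ι) :
    Matrix.gram ℝ (fun i => toLp 2 μ ℝ (h i • const α (v i))) i j
      = (∫ a, h i a * h j a ∂μ) * inner ℝ (v i) (v j) := by
  rw [Matrix.gram, Matrix.of_apply, L2.inner_def, ← integral_mul_const]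
  refine integral_congr_ae ?_
  filter_upwards [coeFn_toLp 2 μ ℝ (h i • const α (v i)),
    coeFn_toLp 2 μ ℝ (h j • const α (v j))] with a hi hj
  rw [hi, hj, smul_apply', smul_apply', real_inner_smul_left, real_inner_smul_right, const_apply,
    const_apply, mul_assoc]

theorem linearIndependent_toLp_smul_const [μ.IsOpenPosMeasure] {h : ι → α →ᵇ ℝ}
    (hh : LinearIndependent ℝ fun i => ⇑(h i)) {v : ι → E} (hv : ∀ i, v i ≠ 0) :
    LinearIndependent ℝ fun i => toLp 2 μ ℝ (h i • const α (v i)) := by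
  have hbcf : LinearIndependent ℝ fun i => h i • const α (v i) :=
    .of_comp ((ContinuousMap.coeFnLinearMap ℝ).comp (toContinuousMapLinearMap α E ℝ))
      (linearIndependent_fun_smul_of_ne_zero hh hv)
  exact hbcf.map' (toLp 2 μ ℝ).toLinearMap (LinearMap.ker_eq_bot.2 (toLp_injective μ))

end BoundedContinuousFunction

instance (μ : ℝ) (v : NNReal) [NeZero v] : (gaussianReal μ v).IsOpenPosMeasure :=
  (gaussianReal_absolutelyContinuous' μ (NeZero.ne v)).isOpenPosMeasure

instance (d : ℕ) : IsProbabilityMeasure (stdGaussian d) :=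
  inferInstanceAs (IsProbabilityMeasure (Measure.pi _))

instance (d : ℕ) : (stdGaussian d).IsOpenPosMeasure :=
  inferInstanceAs (Measure.pi _).IsOpenPosMeasure

/-- If `σ` is real analytic, not a polynomial, and has bounded derivative `σ'`, and
`z_1, …, z_n ∈ ℝ^d` are nonzero and pairwise non-parallel (linearly independent in pairs),
then the Gram matrix `G_{ij} = (∫ σ'(⟨w, z_i⟩) σ'(⟨w, z_j⟩) dγ_d(w)) ⟨z_i, z_j⟩`
is positive definite. -/
theorem stmt_7 (d n : ℕ)
    (σ : ℝ → ℝ) (hana : ∀ u : ℝ, AnalyticAt ℝ σ u)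
    (hpoly : ¬ ∃ p : Polynomial ℝ, ∀ u : ℝ, σ u = p.eval u)
    (C : ℝ) (hC : ∀ u : ℝ, |deriv σ u| ≤ C)
    (z : Fin n → Fin d → ℝ) (hz : ∀ i, z i ≠ 0)
    (hpar : ∀ i j, i ≠ j → LinearIndependent ℝ ![z i, z j]) :
    (Matrix.of fun i j : Fin n =>
        (∫ w, deriv σ (∑ t, w t * z i t) * deriv σ (∑ t, w t * z j t) ∂stdGaussian d)
          * (∑ t, z i t * z j t)).PosDef := by
  have hσ : AnalyticOnNhd ℝ σ Set.univ := fun u _ => hana u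
  have hσ' : ContDiff ℝ ∞ (deriv σ) := hσ.deriv.contDiff
  let g : ℝ →ᵇ ℝ := .ofNormedAddCommGroup (deriv σ) hσ'.continuous C hC
  let S : Fin n → (Fin d → ℝ) →ᵇ ℝ := fun i => g.compContinuous ⟨(· ⬝ᵥ z i), by fun_prop⟩
  let v : Fin n → EuclideanSpace ℝ (Fin d) := fun i => WithLp.toLp 2 (z i)
  have hS : LinearIndependent ℝ fun i => ⇑(S i) :=
    linearIndependent_comp_dotProduct hσ' (hσ.frequently_iteratedDeriv_deriv_ne_zero hpoly) hz hpar
  have hG : Matrix.of (fun i j : Fin n =>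
      (∫ w, deriv σ (∑ t, w t * z i t) * deriv σ (∑ t, w t * z j t) ∂stdGaussian d)
        * (∑ t, z i t * z j t)) =
      Matrix.gram ℝ fun i => BoundedContinuousFunction.toLp 2 (stdGaussian d) ℝ
        (S i • .const _ (v i)) := by
    ext i j
    rw [BoundedContinuousFunction.gram_toLp_smul_const, EuclideanSpace.inner_toLp_toLp,
      star_trivial, dotProduct_comm (z j)]
    rfl
  rw [hG]
  exact Matrix.posDef_gram_of_linearIndependent
    (BoundedContinuousFunction.linearIndependent_toLp_smul_const _ hS (by simpa [v] using hz))
end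

section
/- Let z ∈ ℝ^d be nonzero and set ẑ = z/‖z‖₂. Let a⁰ ∈ ℝ and w⁰ ∈ ℝ^d, and suppose (a, w) : ℝ → ℝ × ℝ^d is differentiable and satisfies a'(t) = ⟨w(t), z⟩ and w'(t) = a(t)·z for all t, with a(0) = a⁰ and w(0) = w⁰. Then for all t ∈ ℝ: a(t) = cosh(‖z‖₂ t)·a⁰ + sinh(‖z‖₂ t)·⟨w⁰, ẑ⟩, and w(t) = sinh(‖z‖₂ t)·a⁰·ẑ + (cosh(‖z‖₂ t) − 1)·⟨w⁰, ẑ⟩·ẑ + w⁰. In particular, the component of w(t) orthogonal to z is constant in t: w(t) − ⟨w(t), ẑ⟩ẑ = w⁰ − ⟨w⁰, ẑ⟩ẑ. -/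
/-!
Writing `b = ⟪w, ẑ⟫` and `z = ‖z‖ • ẑ`, the pair `(a, b)` solves `a' = ‖z‖ b`, `b' = ‖z‖ a`, so undoing
the hyperbolic rotation of angle `‖z‖ t` makes it constant. Moreover `w' = a • z = b' • ẑ`, so
`w - b • ẑ` is constant as well.
-/

open Real

theorem apply_eq_apply_zero_of_hasDerivAt_zero {F : Type*} [NormedAddCommGroup F] [NormedSpace ℝ F]
    {f : ℝ → F} (hf : ∀ t, HasDerivAt f 0 t) (t : ℝ) : f t = f 0 :=
  is_const_of_deriv_eq_zero (fun s => (hf s).differentiableAt) (fun s => (hf s).deriv) t 0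

theorem real_inner_inv_norm_smul_self_right {E : Type*} [NormedAddCommGroup E]
    [InnerProductSpace ℝ E] (z : E) : inner ℝ z (‖z‖⁻¹ • z) = ‖z‖ := by
  rw [real_inner_smul_right, real_inner_self_eq_norm_mul_norm, inv_mul_eq_div, mul_self_div_self]

theorem eq_cosh_sinh_of_hasDerivAt {r : ℝ} {a b : ℝ → ℝ}
    (ha : ∀ t, HasDerivAt a (r * b t) t) (hb : ∀ t, HasDerivAt b (r * a t) t) (t : ℝ) :
    a t = cosh (r * t) * a 0 + sinh (r * t) * b 0 ∧
      b t = sinh (r * t) * a 0 + cosh (r * t) * b 0 := by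
  have hcosh (s : ℝ) : HasDerivAt (fun s => cosh (r * s)) (sinh (r * s) * r) s := by
    simpa using ((hasDerivAt_id s).const_mul r).cosh
  have hsinh (s : ℝ) : HasDerivAt (fun s => sinh (r * s)) (cosh (r * s) * r) s := by
    simpa using ((hasDerivAt_id s).const_mul r).sinh
  have hA := apply_eq_apply_zero_of_hasDerivAt_zero
    (f := fun s => a s * cosh (r * s) - b s * sinh (r * s))
    (fun s => (((ha s).mul (hcosh s)).sub ((hb s).mul (hsinh s))).congr_deriv (by ring)) t
  have hB := apply_eq_apply_zero_of_hasDerivAt_zero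
    (f := fun s => b s * cosh (r * s) - a s * sinh (r * s))
    (fun s => (((hb s).mul (hcosh s)).sub ((ha s).mul (hsinh s))).congr_deriv (by ring)) t
  simp only [mul_zero, cosh_zero, sinh_zero, mul_one, sub_zero] at hA hB
  have hyp := cosh_sq_sub_sinh_sq (r * t)
  rw [← hA, ← hB]
  exact ⟨by linear_combination (-a t) * hyp, by linear_combination (-b t) * hyp⟩

theorem stmt_15_general (d : ℕ) (z : EuclideanSpace ℝ (Fin d))
    (zhat : EuclideanSpace ℝ (Fin d)) (hzhat : zhat = ‖z‖⁻¹ • z)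
    (a0 : ℝ) (w0 : EuclideanSpace ℝ (Fin d))
    (a : ℝ → ℝ) (w : ℝ → EuclideanSpace ℝ (Fin d))
    (ha0 : a 0 = a0) (hw0 : w 0 = w0)
    (hda : ∀ t : ℝ, HasDerivAt a (inner ℝ (w t) z) t)
    (hdw : ∀ t : ℝ, HasDerivAt w (a t • z) t) :
    ∀ t : ℝ,
      a t = Real.cosh (‖z‖ * t) * a0 + Real.sinh (‖z‖ * t) * (inner ℝ w0 zhat)
      ∧ w t = (Real.sinh (‖z‖ * t) * a0) • zhat
          + ((Real.cosh (‖z‖ * t) - 1) * (inner ℝ w0 zhat)) • zhat + w0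
      ∧ w t - (inner ℝ (w t) zhat) • zhat = w0 - (inner ℝ w0 zhat) • zhat := by
  have hz : z = ‖z‖ • zhat := hzhat ▸ (NormedSpace.norm_smul_normalize z).symm
  have hzz : inner ℝ z zhat = ‖z‖ := hzhat ▸ real_inner_inv_norm_smul_self_right z
  have hda' (t : ℝ) : HasDerivAt a (‖z‖ * inner ℝ (w t) zhat) t := by
    have h := hda t
    rwa [hz, real_inner_smul_right] at h
  have hdb (t : ℝ) : HasDerivAt (fun s => inner ℝ (w s) zhat) (‖z‖ * a t) t := by
    simpa only [inner_zero_right, zero_add, real_inner_smul_left, hzz, mul_comm]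
      using (hdw t).inner ℝ (hasDerivAt_const t zhat)
  have hperp (t : ℝ) : w t - inner ℝ (w t) zhat • zhat = w0 - inner ℝ w0 zhat • zhat := by
    refine hw0 ▸ apply_eq_apply_zero_of_hasDerivAt_zero
      (fun s => ((hdw s).sub ((hdb s).smul_const zhat)).congr_deriv ?_) t
    rw [sub_eq_zero, mul_comm, ← smul_smul, ← hz]
  intro t
  obtain ⟨ha, hb⟩ := eq_cosh_sinh_of_hasDerivAt hda' hdb t
  rw [ha0, hw0] at ha hb
  refine ⟨ha, ?_, hperp t⟩
  rw [← sub_add_cancel (w t) (inner ℝ (w t) zhat • zhat), hperp t, hb]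
  module

/-- Explicit solution of the linearized dynamics `a' = ⟨w, z⟩`, `w' = a • z`: with
`ẑ = z/‖z‖`, one has `a(t) = cosh(‖z‖t) a⁰ + sinh(‖z‖t) ⟨w⁰, ẑ⟩` and
`w(t) = sinh(‖z‖t) a⁰ ẑ + (cosh(‖z‖t) - 1) ⟨w⁰, ẑ⟩ ẑ + w⁰`; in particular the component of
`w(t)` orthogonal to `z` is constant in `t`. -/
theorem stmt_15 (d : ℕ) (z : EuclideanSpace ℝ (Fin d)) (hz : z ≠ 0)
    (zhat : EuclideanSpace ℝ (Fin d)) (hzhat : zhat = ‖z‖⁻¹ • z)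
    (a0 : ℝ) (w0 : EuclideanSpace ℝ (Fin d))
    (a : ℝ → ℝ) (w : ℝ → EuclideanSpace ℝ (Fin d))
    (ha0 : a 0 = a0) (hw0 : w 0 = w0)
    (hda : ∀ t : ℝ, HasDerivAt a (inner ℝ (w t) z) t)
    (hdw : ∀ t : ℝ, HasDerivAt w (a t • z) t) :
    ∀ t : ℝ,
      a t = Real.cosh (‖z‖ * t) * a0 + Real.sinh (‖z‖ * t) * (inner ℝ w0 zhat)
      ∧ w t = (Real.sinh (‖z‖ * t) * a0) • zhat
          + ((Real.cosh (‖z‖ * t) - 1) * (inner ℝ w0 zhat)) • zhat + w0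
      ∧ w t - (inner ℝ (w t) zhat) • zhat = w0 - (inner ℝ w0 zhat) • zhat :=
  stmt_15_general d z zhat hzhat a0 w0 a w ha0 hw0 hda hdw
end

section
/- Fix m, n, d ≥ 1, scales ν, ε > 0, an activation σ : ℝ → ℝ that is twice continuously differentiable with σ(0) = 0, σ'(0) = 1, |σ'| ≤ 1 and |σ''| ≤ 1 on ℝ, and data (x_i, y_i)_{i=1}^n with ‖x_i‖₂ ≤ 1 and |y_i| ≤ 1. For parameters θ = (a_k, w_k)_{k=1}^m define for each k ∈ [m]: f_k = (1/n) Σ_{i=1}^n ( e_i(θ)·σ(ε⟨w_k, x_i⟩)/ε + y_i·⟨w_k, x_i⟩ ), g_k = (1/n) Σ_{i=1}^n ( e_i(θ)·a_k·σ'(ε⟨w_k, x_i⟩) + y_i·a_k )·x_i, q_k = √((ν²/ε²)·a_k² + ‖w_k‖₂²), and q_max = max_{k ∈ [m]} q_k. Then for every k ∈ [m]: |f_k| ≤ m·ε²·q_max²·‖w_k‖₂ + ε·‖w_k‖₂², and ‖g_k‖₂ ≤ m·ε²·q_max²·|a_k| + ε·‖w_k‖₂·|a_k|. -/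
/-!
Since `σ(0) = 0`, `σ'(0) = 1` and `|σ'|, |σ''| ≤ 1`, the activation satisfies `|σ u| ≤ |u|`,
`|σ' u - 1| ≤ |u|` and `|σ u - u| ≤ u²`. The first bound, together with Cauchy–Schwarz and
`|ν a| ε ‖w‖ ≤ ε² ((ν/ε)² a² + ‖w‖²)`, bounds every network output by `m ε² q_max²`. Writing
`e_i = F_i - y_i` with `F_i` the output, the summands of `f_k` and `g_k` split into a part carrying
`F_i` and a part carrying `y_i` times the linearisation error `σ(εs)/ε - s` resp. `σ'(εs) - 1`,
which is of order `ε`.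
-/

open Finset

lemma abs_sum_mul_le_sqrt_of_sqrt_le_one {ι : Type*} (s : Finset ι) (f : ι → ℝ) {g : ι → ℝ}
    (hg : √(∑ i ∈ s, g i ^ 2) ≤ 1) : |∑ i ∈ s, f i * g i| ≤ √(∑ i ∈ s, f i ^ 2) := by
  have hcs : |∑ i ∈ s, f i * g i| ≤ √(∑ i ∈ s, f i ^ 2) * √(∑ i ∈ s, g i ^ 2) := by
    refine abs_le.mpr ⟨?_, Real.sum_mul_le_sqrt_mul_sqrt s f g⟩
    have := Real.sum_mul_le_sqrt_mul_sqrt s (fun i => -f i) g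
    simp only [neg_mul, sum_neg_distrib, neg_sq] at this
    linarith
  exact hcs.trans (mul_le_of_le_one_right (Real.sqrt_nonneg _) hg)

lemma sqrt_sum_sq_eq_norm_toLp {ι : Type*} [Fintype ι] (v : ι → ℝ) :
    √(∑ i, v i ^ 2) = ‖WithLp.toLp 2 v‖ := by
  simp [EuclideanSpace.norm_eq]

lemma norm_inv_card_smul_sum_le {ι E : Type*} [Fintype ι] [Nonempty ι]
    [SeminormedAddCommGroup E] [NormedSpace ℝ E] {v : ι → E} {B : ℝ} (h : ∀ i, ‖v i‖ ≤ B) :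
    ‖(Fintype.card ι : ℝ)⁻¹ • ∑ i, v i‖ ≤ B := by
  have hcard : (0 : ℝ) < Fintype.card ι := by exact_mod_cast Fintype.card_pos
  rw [norm_smul, norm_inv, Real.norm_natCast, inv_mul_le_iff₀ hcard]
  calc ‖∑ i, v i‖ ≤ ∑ _i : ι, B := norm_sum_le_of_le _ fun i _ => h i
    _ = Fintype.card ι * B := by simp

lemma abs_average_le {ι : Type*} [Fintype ι] [Nonempty ι] {c : ι → ℝ} {B : ℝ}
    (h : ∀ i, |c i| ≤ B) : |1 / (Fintype.card ι : ℝ) * ∑ i, c i| ≤ B := by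
  simpa using norm_inv_card_smul_sum_le (v := c) (by simpa using h)

lemma sqrt_sum_sq_average_smul_le {ι κ : Type*} [Fintype ι] [Nonempty ι] [Fintype κ]
    {c : ι → ℝ} {x : ι → κ → ℝ} {B : ℝ} (hc : ∀ i, |c i| ≤ B) (hx : ∀ i, √(∑ j, x i j ^ 2) ≤ 1) :
    √(∑ j, (1 / (Fintype.card ι : ℝ) * ∑ i, c i * x i j) ^ 2) ≤ B := by
  have hterm : ∀ i, ‖c i • WithLp.toLp 2 (x i)‖ ≤ B := fun i => by
    rw [norm_smul, ← sqrt_sum_sq_eq_norm_toLp, Real.norm_eq_abs]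
    exact (mul_le_of_le_one_right (abs_nonneg _) (hx i)).trans (hc i)
  convert norm_inv_card_smul_sum_le hterm using 1
  rw [sqrt_sum_sq_eq_norm_toLp]
  congr 1
  ext j
  simp

section Activation

variable {σ : ℝ → ℝ}

lemma abs_sub_le_of_abs_deriv_le (hσ : Differentiable ℝ σ) {C : ℝ}
    (hC : ∀ u, |deriv σ u| ≤ C) (u v : ℝ) : |σ u - σ v| ≤ C * |u - v| :=
  convex_univ.norm_image_sub_le_of_norm_deriv_le (fun z _ => hσ z) (fun z _ => hC z)
    (Set.mem_univ v) (Set.mem_univ u)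

lemma abs_le_abs_of_abs_deriv_le_one (hσ : Differentiable ℝ σ) (h0 : σ 0 = 0)
    (h' : ∀ u, |deriv σ u| ≤ 1) (u : ℝ) : |σ u| ≤ |u| := by
  simpa [h0] using abs_sub_le_of_abs_deriv_le hσ h' u 0

lemma abs_sub_self_le_sq (hσ : Differentiable ℝ σ) (h0 : σ 0 = 0)
    (h' : ∀ u, |deriv σ u - 1| ≤ |u|) (u : ℝ) : |σ u - u| ≤ u ^ 2 := by
  have := (convex_uIcc 0 u).norm_image_sub_le_of_norm_hasDerivWithin_le
    (fun v _ => ((hσ v).hasDerivAt.sub (hasDerivAt_id v)).hasDerivWithinAt)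
    (fun v hv => (h' v).trans (by simpa using Set.abs_sub_left_of_mem_uIcc hv))
    Set.left_mem_uIcc Set.right_mem_uIcc
  simpa [h0, sq] using this

end Activation

section Estimates

variable {σ : ℝ → ℝ} {ε : ℝ}

lemma abs_comp_mul_div_le (hσ : ∀ u, |σ u| ≤ |u|) (hε : 0 < ε) (s : ℝ) :
    |σ (ε * s) / ε| ≤ |s| := by
  rw [abs_div, abs_of_pos hε, div_le_iff₀ hε]
  simpa [abs_mul, abs_of_pos hε, mul_comm] using hσ (ε * s)

lemma abs_comp_mul_div_sub_le (hσ : ∀ u, |σ u - u| ≤ u ^ 2) (hε : 0 < ε) (s : ℝ) :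
    |σ (ε * s) / ε - s| ≤ ε * s ^ 2 := by
  have hsplit : σ (ε * s) / ε - s = (σ (ε * s) - ε * s) / ε := by field_simp
  rw [hsplit, abs_div, abs_of_pos hε, div_le_iff₀ hε]
  calc |σ (ε * s) - ε * s| ≤ (ε * s) ^ 2 := hσ (ε * s)
    _ = ε * s ^ 2 * ε := by ring

lemma abs_mul_mul_comp_mul_le (hσ : ∀ u, |σ u| ≤ |u|) (hε : 0 < ε) (ν a : ℝ) {s W : ℝ}
    (hs : |s| ≤ W) : |ν * a * σ (ε * s)| ≤ ε ^ 2 * (ν ^ 2 / ε ^ 2 * a ^ 2 + W ^ 2) := by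
  have hsW : s ^ 2 ≤ W ^ 2 := sq_le_sq' (neg_le_of_abs_le hs) (le_of_abs_le hs)
  calc |ν * a * σ (ε * s)| = ε ^ 2 * (|ν * a / ε| * |σ (ε * s) / ε|) := by
        rw [abs_div, abs_div, abs_of_pos hε, abs_mul (ν * a)]; field_simp
    _ ≤ ε ^ 2 * (|ν * a / ε| * |s|) := by
        gcongr ε ^ 2 * (_ * ?_); exact abs_comp_mul_div_le hσ hε s
    _ ≤ ε ^ 2 * ((ν * a / ε) ^ 2 + s ^ 2) := by
        gcongr
        nlinarith [two_mul_le_add_sq |ν * a / ε| |s|, sq_abs (ν * a / ε), sq_abs s,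
          abs_nonneg (ν * a / ε), abs_nonneg s]
    _ = ε ^ 2 * (ν ^ 2 / ε ^ 2 * a ^ 2 + s ^ 2) := by ring
    _ ≤ ε ^ 2 * (ν ^ 2 / ε ^ 2 * a ^ 2 + W ^ 2) := by gcongr

lemma abs_network_output_le {m d : ℕ} (hσ : ∀ u, |σ u| ≤ |u|) (hε : 0 < ε) (ν : ℝ)
    (a : Fin m → ℝ) (w : Fin m → Fin d → ℝ) {z : Fin d → ℝ} (hz : √(∑ t, z t ^ 2) ≤ 1) {Q : ℝ}
    (hQ : ∀ k, √(ν ^ 2 / ε ^ 2 * a k ^ 2 + ∑ t, w k t ^ 2) ≤ Q) :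
    |∑ k, ν * a k * σ (ε * ∑ t, w k t * z t)| ≤ m * ε ^ 2 * Q ^ 2 := by
  have hneuron : ∀ k, |ν * a k * σ (ε * ∑ t, w k t * z t)| ≤ ε ^ 2 * Q ^ 2 := fun k =>
    calc |ν * a k * σ (ε * ∑ t, w k t * z t)|
        ≤ ε ^ 2 * (ν ^ 2 / ε ^ 2 * a k ^ 2 + √(∑ t, w k t ^ 2) ^ 2) :=
          abs_mul_mul_comp_mul_le hσ hε ν (a k) (abs_sum_mul_le_sqrt_of_sqrt_le_one _ _ hz)
      _ = ε ^ 2 * √(ν ^ 2 / ε ^ 2 * a k ^ 2 + ∑ t, w k t ^ 2) ^ 2 := by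
          rw [Real.sq_sqrt (by positivity), Real.sq_sqrt (by positivity)]
      _ ≤ ε ^ 2 * Q ^ 2 := by gcongr; exact hQ k
  calc |∑ k, ν * a k * σ (ε * ∑ t, w k t * z t)|
      ≤ ∑ k, |ν * a k * σ (ε * ∑ t, w k t * z t)| := abs_sum_le_sum_abs _ _
    _ ≤ ∑ _k : Fin m, ε ^ 2 * Q ^ 2 := sum_le_sum fun k _ => hneuron k
    _ = m * ε ^ 2 * Q ^ 2 := by simp [mul_assoc]

lemma abs_f_summand_le (hσ : ∀ u, |σ u| ≤ |u|) (hσ₂ : ∀ u, |σ u - u| ≤ u ^ 2) (hε : 0 < ε)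
    {F y s M W : ℝ} (hF : |F| ≤ M) (hy : |y| ≤ 1) (hs : |s| ≤ W) :
    |(F - y) * σ (ε * s) / ε + y * s| ≤ M * W + ε * W ^ 2 := by
  have hsW : s ^ 2 ≤ W ^ 2 := sq_le_sq' (neg_le_of_abs_le hs) (le_of_abs_le hs)
  have hM : 0 ≤ M := (abs_nonneg F).trans hF
  calc |(F - y) * σ (ε * s) / ε + y * s|
      = |F * (σ (ε * s) / ε) - y * (σ (ε * s) / ε - s)| := by congr 1; ring
    _ ≤ |F| * |σ (ε * s) / ε| + |y| * |σ (ε * s) / ε - s| := by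
        rw [← abs_mul, ← abs_mul]; exact abs_sub _ _
    _ ≤ M * W + 1 * (ε * W ^ 2) := by
        gcongr
        · exact (abs_comp_mul_div_le hσ hε s).trans hs
        · exact (abs_comp_mul_div_sub_le hσ₂ hε s).trans (by gcongr)
    _ = M * W + ε * W ^ 2 := by ring

lemma abs_g_coeff_le {τ : ℝ → ℝ} (hτ : ∀ u, |τ u| ≤ 1) (hτ₁ : ∀ u, |τ u - 1| ≤ |u|)
    (hε : 0 < ε) {F y s a M W : ℝ} (hF : |F| ≤ M) (hy : |y| ≤ 1) (hs : |s| ≤ W) :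
    |(F - y) * a * τ (ε * s) + y * a| ≤ M * |a| + ε * W * |a| := by
  have hM : 0 ≤ M := (abs_nonneg F).trans hF
  have hlin : |τ (ε * s) - 1| ≤ ε * W := by
    calc |τ (ε * s) - 1| ≤ |ε * s| := hτ₁ (ε * s)
      _ = ε * |s| := by rw [abs_mul, abs_of_pos hε]
      _ ≤ ε * W := by gcongr
  calc |(F - y) * a * τ (ε * s) + y * a|
      = |F * τ (ε * s) - y * (τ (ε * s) - 1)| * |a| := by rw [← abs_mul]; congr 1; ring
    _ ≤ (|F| * |τ (ε * s)| + |y| * |τ (ε * s) - 1|) * |a| := by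
        gcongr; rw [← abs_mul, ← abs_mul]; exact abs_sub _ _
    _ ≤ (M * 1 + 1 * (ε * W)) * |a| := by gcongr; exact hτ _
    _ = M * |a| + ε * W * |a| := by ring

end Estimates

theorem stmt_17_general (m n d : ℕ) (hn : 1 ≤ n)
    (ν ε : ℝ) (hε : 0 < ε)
    (σ : ℝ → ℝ) (hσ : ContDiff ℝ 2 σ) (hσ0 : σ 0 = 0) (hσ1 : deriv σ 0 = 1)
    (hσ' : ∀ u : ℝ, |deriv σ u| ≤ 1) (hσ'' : ∀ u : ℝ, |deriv (deriv σ) u| ≤ 1)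
    (x : Fin n → Fin d → ℝ) (y : Fin n → ℝ)
    (hx : ∀ i, Real.sqrt (∑ t, (x i t) ^ 2) ≤ 1) (hy : ∀ i, |y i| ≤ 1)
    (a : Fin m → ℝ) (w : Fin m → Fin d → ℝ)
    (e : Fin n → ℝ)
    (he : ∀ i, e i = (∑ k, ν * a k * σ (ε * ∑ t, w k t * x i t)) - y i)
    (f : Fin m → ℝ)
    (hf : ∀ k, f k = (1 / (n : ℝ)) *
      ∑ i, (e i * σ (ε * ∑ t, w k t * x i t) / ε + y i * ∑ t, w k t * x i t))
    (g : Fin m → Fin d → ℝ)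
    (hg : ∀ k j, g k j = (1 / (n : ℝ)) *
      ∑ i, (e i * a k * deriv σ (ε * ∑ t, w k t * x i t) + y i * a k) * x i j)
    (q : Fin m → ℝ)
    (hq : ∀ k, q k = Real.sqrt ((ν ^ 2 / ε ^ 2) * (a k) ^ 2 + ∑ t, (w k t) ^ 2))
    (qmax : ℝ) (hqmax : qmax = ⨆ k, q k) :
    ∀ k,
      |f k| ≤ m * ε ^ 2 * qmax ^ 2 * Real.sqrt (∑ t, (w k t) ^ 2)
          + ε * (∑ t, (w k t) ^ 2)
      ∧ Real.sqrt (∑ j, (g k j) ^ 2) ≤ m * ε ^ 2 * qmax ^ 2 * |a k|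
          + ε * Real.sqrt (∑ t, (w k t) ^ 2) * |a k| := by
  have hσd : Differentiable ℝ σ := hσ.differentiable (by norm_num)
  have hσ_abs := abs_le_abs_of_abs_deriv_le_one hσd hσ0 hσ'
  have hσ'_taylor : ∀ u, |deriv σ u - 1| ≤ |u| := fun u => by
    simpa [hσ1] using abs_sub_le_of_abs_deriv_le hσ.differentiable_deriv_two hσ'' u 0
  have hσ_taylor := abs_sub_self_le_sq hσd hσ0 hσ'_taylor
  have hq_le : ∀ k, q k ≤ qmax := fun k => hqmax ▸ le_ciSup (Set.finite_range q).bddAbove k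
  have hout : ∀ i, |e i + y i| ≤ m * ε ^ 2 * qmax ^ 2 := fun i => by
    rw [he, sub_add_cancel]
    exact abs_network_output_le hσ_abs hε ν a w (hx i) fun k => hq k ▸ hq_le k
  have hcs : ∀ k i, |∑ t, w k t * x i t| ≤ √(∑ t, w k t ^ 2) := fun k i =>
    abs_sum_mul_le_sqrt_of_sqrt_le_one _ _ (hx i)
  have : Nonempty (Fin n) := ⟨⟨0, hn⟩⟩
  have hcard : (Fintype.card (Fin n) : ℝ) = n := by simp
  intro k
  constructor
  · rw [hf k, ← hcard]
    refine abs_average_le fun i => ?_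
    rw [← add_sub_cancel_right (e i) (y i)]
    exact (abs_f_summand_le hσ_abs hσ_taylor hε (hout i) (hy i) (hcs k i)).trans_eq
      (by rw [Real.sq_sqrt (by positivity)])
  · simp only [hg, ← hcard]
    refine sqrt_sum_sq_average_smul_le (fun i => ?_) hx
    rw [← add_sub_cancel_right (e i) (y i)]
    exact abs_g_coeff_le hσ' hσ'_taylor hε (hout i) (hy i) (hcs k i)

/-- Estimates on the difference between the real and the linear dynamics (2-energy,
w-lag regime): with `q_k = √((ν²/ε²) a_k² + ‖w_k‖₂²)` and `q_max = max_k q_k`, one has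
`|f_k| ≤ m ε² q_max² ‖w_k‖₂ + ε ‖w_k‖₂²` and
`‖g_k‖₂ ≤ m ε² q_max² |a_k| + ε ‖w_k‖₂ |a_k|`. -/
theorem stmt_17 (m n d : ℕ) (hm : 1 ≤ m) (hn : 1 ≤ n) (hd : 1 ≤ d)
    (ν ε : ℝ) (hν : 0 < ν) (hε : 0 < ε)
    (σ : ℝ → ℝ) (hσ : ContDiff ℝ 2 σ) (hσ0 : σ 0 = 0) (hσ1 : deriv σ 0 = 1)
    (hσ' : ∀ u : ℝ, |deriv σ u| ≤ 1) (hσ'' : ∀ u : ℝ, |deriv (deriv σ) u| ≤ 1)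
    (x : Fin n → Fin d → ℝ) (y : Fin n → ℝ)
    (hx : ∀ i, Real.sqrt (∑ t, (x i t) ^ 2) ≤ 1) (hy : ∀ i, |y i| ≤ 1)
    (a : Fin m → ℝ) (w : Fin m → Fin d → ℝ)
    (e : Fin n → ℝ)
    (he : ∀ i, e i = (∑ k, ν * a k * σ (ε * ∑ t, w k t * x i t)) - y i)
    (f : Fin m → ℝ)
    (hf : ∀ k, f k = (1 / (n : ℝ)) *
      ∑ i, (e i * σ (ε * ∑ t, w k t * x i t) / ε + y i * ∑ t, w k t * x i t))
    (g : Fin m → Fin d → ℝ)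
    (hg : ∀ k j, g k j = (1 / (n : ℝ)) *
      ∑ i, (e i * a k * deriv σ (ε * ∑ t, w k t * x i t) + y i * a k) * x i j)
    (q : Fin m → ℝ)
    (hq : ∀ k, q k = Real.sqrt ((ν ^ 2 / ε ^ 2) * (a k) ^ 2 + ∑ t, (w k t) ^ 2))
    (qmax : ℝ) (hqmax : qmax = ⨆ k, q k) :
    ∀ k,
      |f k| ≤ m * ε ^ 2 * qmax ^ 2 * Real.sqrt (∑ t, (w k t) ^ 2)
          + ε * (∑ t, (w k t) ^ 2)
      ∧ Real.sqrt (∑ j, (g k j) ^ 2) ≤ m * ε ^ 2 * qmax ^ 2 * |a k|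
          + ε * Real.sqrt (∑ t, (w k t) ^ 2) * |a k| :=
  stmt_17_general m n d hn ν ε hε σ hσ hσ0 hσ1 hσ' hσ'' x y hx hy a w e he f hf g hg q hq qmax hqmax
end

section
/- Let m ≥ 1, let c ≥ 0 and r ≥ 1 be reals, and let a_1, …, a_m, b_1, …, b_m be reals satisfying (1/m) Σ_{k=1}^m a_k² ≥ 1/2, (1/m) Σ_{k=1}^m b_k² ≥ 1/2, and |(1/m) Σ_{k=1}^m a_k b_k| ≤ 1/4. Then (1/m) Σ_{k=1}^m [ (1/2)(r² − r^{−2})·c·a_k + (1/2)(r² + r^{−2} − 2)·b_k ]² ≥ (3/32)·(r − r^{−1})⁴. -/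
set_option maxHeartbeats 1000000


/-- Key quadratic lower bound in the condensed (w-lag) regime: if the normalized second
moments of `a` and `b` are at least `1/2` and the normalized cross moment is at most `1/4`
in absolute value, then
`(1/m) Σ_k [(1/2)(r² - r⁻²) c a_k + (1/2)(r² + r⁻² - 2) b_k]² ≥ (3/32)(r - r⁻¹)⁴`. -/
theorem stmt_19 (m : ℕ) (hm : 1 ≤ m) (c r : ℝ) (hc : 0 ≤ c) (hr : 1 ≤ r)
    (a b : Fin m → ℝ)
    (ha : 1 / 2 ≤ (1 / (m : ℝ)) * ∑ k, (a k) ^ 2)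
    (hb : 1 / 2 ≤ (1 / (m : ℝ)) * ∑ k, (b k) ^ 2)
    (hab : |(1 / (m : ℝ)) * ∑ k, a k * b k| ≤ 1 / 4) :
    (3 / 32) * (r - r⁻¹) ^ 4 ≤
      (1 / (m : ℝ)) * ∑ k,
        ((1 / 2) * (r ^ 2 - r⁻¹ ^ 2) * c * a k + (1 / 2) * (r ^ 2 + r⁻¹ ^ 2 - 2) * b k) ^ 2 := by
  have hr0 : (0:ℝ) < r := lt_of_lt_of_le one_pos hr
  have hrinv : r * r⁻¹ = 1 := mul_inv_cancel₀ hr0.ne'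
  have hi0 : 0 < r⁻¹ := inv_pos.mpr hr0
  have hi1 : r⁻¹ ≤ 1 := inv_le_one_of_one_le₀ hr
  set A : ℝ := (1/2) * (r^2 - r⁻¹^2) * c with hA
  set B : ℝ := (1/2) * (r^2 + r⁻¹^2 - 2) with hB
  have hA0 : 0 ≤ A := by
    apply mul_nonneg _ hc
    nlinarith
  have hB0 : 0 ≤ B := by nlinarith
  have h2B : (r - r⁻¹)^2 = 2 * B := by
    rw [hB]; nlinarith
  have hsum : ∑ k, (A * a k + B * b k)^2
      = A^2 * ∑ k, (a k)^2 + 2*A*B * ∑ k, (a k * b k) + B^2 * ∑ k, (b k)^2 := by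
    simp_rw [Finset.mul_sum, ← Finset.sum_add_distrib]
    apply Finset.sum_congr rfl
    intros; ring
  rw [hsum]
  have hab' : -(1/4) ≤ (1 / (m : ℝ)) * ∑ k, a k * b k := (abs_le.mp hab).1
  set Sa : ℝ := (1 / (m : ℝ)) * ∑ k, (a k)^2 with hSa
  set Sb : ℝ := (1 / (m : ℝ)) * ∑ k, (b k)^2 with hSb
  set Sab : ℝ := (1 / (m : ℝ)) * ∑ k, a k * b k with hSab
  have hexp : (1 / (m : ℝ)) * (A^2 * ∑ k, (a k)^2 + 2*A*B * ∑ k, (a k * b k) + B^2 * ∑ k, (b k)^2)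
      = A^2 * Sa + 2*A*B * Sab + B^2 * Sb := by
    rw [hSa, hSb, hSab]; ring
  rw [hexp]
  have h4 : (r - r⁻¹)^4 = 4 * B^2 := by nlinarith [h2B]
  rw [h4]
  have h1 : A^2 * (1/2) ≤ A^2 * Sa := by
    apply mul_le_mul_of_nonneg_left (by linarith) (sq_nonneg A)
  have h3 : B^2 * (1/2) ≤ B^2 * Sb := by
    apply mul_le_mul_of_nonneg_left (by linarith) (sq_nonneg B)
  have h2 : (2*A*B) * (-(1/4)) ≤ (2*A*B) * Sab := by
    apply mul_le_mul_of_nonneg_left hab' (by positivity)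
  nlinarith [sq_nonneg (A - B/2), h1, h2, h3]
end
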